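/- arXiv:1701.05393 — 3 statements merged into one kernel-verified Lean document; each statement's English description precedes it below -/
import Mathlib

section
/- Fix T > 0 and K > T/2 + 1, and define u¹ : [0,T] × ℝ → ℝ by u¹(t,x) = 1 if 0 ≤ x ≤ (t/2 + 1)² and u¹(t,x) = 0 otherwise. Then u¹ is a weak solution of the model Cauchy problem: for every smooth compactly supported φ : ℝ × ℝ → ℝ with φ(T,x) = 0 for all x, one has ∫₀ᵀ ∫_ℝ [ u¹(t,x) ∂ₜφ(t,x) + sgn(x) · min(√|x|, K) · u¹(t,x)² · ∂ₓφ(t,x) + u¹(t,x)² · (2√|x|)⁻¹ · 1_{0<|x|<K²}(x) · φ(t,x) ] dx dt + ∫_ℝ 1_{[0,1]}(x) φ(0,x) dx = 0. -/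
open MeasureTheory Set

/-- `u` is a weak solution of the model Cauchy problem for the scalar conservation law
`∂ₜu + 2 sgn(x) min(√|x|, K) u ∂ₓu = 0` on `(0,T) × ℝ` with initial datum `1_{[0,1]}`. -/
def IsWeakSolutionModel (T K : ℝ) (u : ℝ → ℝ → ℝ) : Prop :=
  ∀ φ : ℝ × ℝ → ℝ, ContDiff ℝ (⊤ : ℕ∞) φ → HasCompactSupport φ → (∀ x : ℝ, φ (T, x) = 0) →
    (∫ t in Ioc (0 : ℝ) T, ∫ x : ℝ,
        (u t x * deriv (fun s : ℝ => φ (s, x)) t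
          + Real.sign x * min (Real.sqrt |x|) K * (u t x) ^ 2 * deriv (fun y : ℝ => φ (t, y)) x
          + (u t x) ^ 2 * (2 * Real.sqrt |x|)⁻¹ *
              (Ioo (0 : ℝ) (K ^ 2)).indicator (fun _ => (1 : ℝ)) |x| * φ (t, x)))
      + (∫ x : ℝ, (Icc (0 : ℝ) 1).indicator (fun _ => (1 : ℝ)) x * φ (0, x)) = 0

noncomputable def pdt (φ : ℝ × ℝ → ℝ) : ℝ × ℝ → ℝ := fun p => fderiv ℝ φ p (1, 0)
noncomputable def pdx (φ : ℝ × ℝ → ℝ) : ℝ × ℝ → ℝ := fun p => fderiv ℝ φ p (0, 1)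

variable {φ : ℝ × ℝ → ℝ}

lemma hasDerivAt_pdt (hφ : ContDiff ℝ (⊤ : ℕ∞) φ) (t x : ℝ) :
    HasDerivAt (fun s => φ (s, x)) (pdt φ (t, x)) t := by
  have h1 : HasDerivAt (fun s : ℝ => (s, x)) ((1:ℝ), (0:ℝ)) t :=
    (hasDerivAt_id t).prodMk (hasDerivAt_const t x)
  exact (hφ.differentiable (by simp) (t, x)).hasFDerivAt.comp_hasDerivAt t h1

lemma hasDerivAt_pdx (hφ : ContDiff ℝ (⊤ : ℕ∞) φ) (t x : ℝ) :
    HasDerivAt (fun y => φ (t, y)) (pdx φ (t, x)) x := by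
  have h1 : HasDerivAt (fun y : ℝ => (t, y)) ((0:ℝ), (1:ℝ)) x :=
    (hasDerivAt_const x t).prodMk (hasDerivAt_id x)
  exact (hφ.differentiable (by simp) (t, x)).hasFDerivAt.comp_hasDerivAt x h1

lemma continuous_pdt (hφ : ContDiff ℝ (⊤ : ℕ∞) φ) : Continuous (pdt φ) :=
  (hφ.continuous_fderiv (by simp)).clm_apply continuous_const

lemma continuous_pdx (hφ : ContDiff ℝ (⊤ : ℕ∞) φ) : Continuous (pdx φ) :=
  (hφ.continuous_fderiv (by simp)).clm_apply continuous_const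

lemma inner_eq (T K : ℝ) (hT : 0 < T) (hK : T / 2 + 1 < K)
    (hφ : ContDiff ℝ (⊤ : ℕ∞) φ) (hφc : HasCompactSupport φ)
    (u1 : ℝ → ℝ → ℝ)
    (hu1 : ∀ t x, u1 t x = if 0 ≤ x ∧ x ≤ (t / 2 + 1) ^ 2 then 1 else 0)
    {t : ℝ} (ht : t ∈ Ioc 0 T) :
    (∫ x : ℝ,
        (u1 t x * deriv (fun s : ℝ => φ (s, x)) t
          + Real.sign x * min (Real.sqrt |x|) K * (u1 t x) ^ 2 * deriv (fun y : ℝ => φ (t, y)) x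
          + (u1 t x) ^ 2 * (2 * Real.sqrt |x|)⁻¹ *
              (Ioo (0 : ℝ) (K ^ 2)).indicator (fun _ => (1 : ℝ)) |x| * φ (t, x)))
    = (∫ x : ℝ, ({q : ℝ × ℝ | 0 < q.2 ∧ q.2 ≤ (q.1 / 2 + 1) ^ 2}).indicator (pdt φ) (t, x))
      + (t / 2 + 1) * φ (t, (t / 2 + 1) ^ 2) := by
  obtain ⟨ht0, htT⟩ := ht
  set c : ℝ := (t / 2 + 1) ^ 2 with hc
  have htp : (0:ℝ) < t / 2 + 1 := by linarith
  have hc0 : (0:ℝ) < c := by positivity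
  have hsqc : Real.sqrt c = t / 2 + 1 := Real.sqrt_sq htp.le
  have hcT : c ≤ (T / 2 + 1) ^ 2 := by nlinarith
  have hTK : (T / 2 + 1) ^ 2 < K ^ 2 := by nlinarith
  have hcont : Continuous fun x : ℝ => φ (t, x) := hφ.continuous.comp (Continuous.prodMk_right t)
  have hcontx : Continuous fun x : ℝ => pdx φ (t, x) :=
    (continuous_pdx hφ).comp (Continuous.prodMk_right t)
  have hcontt : Continuous fun x : ℝ => pdt φ (t, x) :=
    (continuous_pdt hφ).comp (Continuous.prodMk_right t)
  set g : ℝ → ℝ := fun x => Real.sqrt x * φ (t, x) with hg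
  set gd : ℝ → ℝ := fun x => (2 * Real.sqrt x)⁻¹ * φ (t, x) + Real.sqrt x * pdx φ (t, x) with hgd
  have hgder : ∀ x ∈ Ioo (0:ℝ) c, HasDerivAt g (gd x) x := by
    intro x hx
    have h1 : HasDerivAt Real.sqrt (1 / (2 * Real.sqrt x)) x := Real.hasDerivAt_sqrt hx.1.ne'
    have h2 : HasDerivAt (fun y => Real.sqrt y * φ (t, y))
        ((1 / (2 * Real.sqrt x)) * φ (t, x) + Real.sqrt x * pdx φ (t, x)) x :=
      (h1.mul (hasDerivAt_pdx hφ t x))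
    rw [one_div] at h2
    exact h2
  obtain ⟨C, hC⟩ := hφ.continuous.bounded_above_of_compact_support hφc
  have hC0 : 0 ≤ C := le_trans (norm_nonneg _) (hC (0, 0))
  have hint1 : IntervalIntegrable (fun x => (2 * Real.sqrt x)⁻¹ * φ (t, x)) volume 0 c := by
    have hmaj : IntervalIntegrable (fun x : ℝ => (C / 2) * x ^ (-(1/2) : ℝ)) volume 0 c :=
      (intervalIntegral.intervalIntegrable_rpow' (by norm_num)).const_mul _
    apply hmaj.mono_fun
    · exact ((Real.continuous_sqrt.measurable.const_mul 2).inv.mul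
        hcont.measurable).aestronglyMeasurable
    · filter_upwards [ae_restrict_mem measurableSet_uIoc] with x hx
      rw [uIoc_of_le hc0.le] at hx
      have hx0 : 0 < x := hx.1
      have hsx : 0 < Real.sqrt x := Real.sqrt_pos.2 hx0
      have hrw : (2 * Real.sqrt x)⁻¹ = (1/2) * x ^ (-(1/2) : ℝ) := by
        rw [Real.rpow_neg hx0.le, ← Real.sqrt_eq_rpow, mul_inv]
        ring
      have : ‖(2 * Real.sqrt x)⁻¹ * φ (t, x)‖ = (2 * Real.sqrt x)⁻¹ * ‖φ (t, x)‖ := by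
        rw [norm_mul, norm_inv, Real.norm_of_nonneg (by positivity)]
      rw [this, hrw]
      have hxp : (0:ℝ) < x ^ (-(1/2) : ℝ) := Real.rpow_pos_of_pos hx0 _
      have : (1/2) * x ^ (-(1/2) : ℝ) * ‖φ (t, x)‖ ≤ (1/2) * x ^ (-(1/2) : ℝ) * C := by
        apply mul_le_mul_of_nonneg_left (hC _) (by positivity)
      calc (1/2) * x ^ (-(1/2) : ℝ) * ‖φ (t, x)‖ ≤ (1/2) * x ^ (-(1/2) : ℝ) * C := this
        _ = C / 2 * x ^ (-(1/2) : ℝ) := by ring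
        _ ≤ ‖C / 2 * x ^ (-(1/2) : ℝ)‖ := le_abs_self _
  have hgd_int : IntervalIntegrable gd volume 0 c :=
    hint1.add ((Real.continuous_sqrt.mul hcontx).intervalIntegrable 0 c)
  have hFTC : ∫ x in (0:ℝ)..c, gd x = g c - g 0 :=
    intervalIntegral.integral_eq_sub_of_hasDerivAt_of_le hc0.le
      (Real.continuous_sqrt.mul hcont).continuousOn hgder hgd_int
  have hgc : g c - g 0 = (t / 2 + 1) * φ (t, c) := by simp [hg, hsqc]
  -- pointwise identity
  set F1 : ℝ → ℝ := (Icc (0:ℝ) c).indicator (fun x => pdt φ (t, x)) with hF1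
  set F2 : ℝ → ℝ := (Ioc (0:ℝ) c).indicator gd with hF2
  have hpt : ∀ x : ℝ, x ≠ 0 →
      (u1 t x * deriv (fun s : ℝ => φ (s, x)) t
          + Real.sign x * min (Real.sqrt |x|) K * (u1 t x) ^ 2 * deriv (fun y : ℝ => φ (t, y)) x
          + (u1 t x) ^ 2 * (2 * Real.sqrt |x|)⁻¹ *
              (Ioo (0 : ℝ) (K ^ 2)).indicator (fun _ => (1 : ℝ)) |x| * φ (t, x))
        = F1 x + F2 x := by
    intro x hx
    rcases lt_or_gt_of_ne hx with hneg | hpos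
    · have hu : u1 t x = 0 := by rw [hu1]; exact if_neg (by push_neg; intro h; linarith)
      have h1 : F1 x = 0 := indicator_of_notMem (by simp [hneg, not_le.2 hneg]) _
      have h2 : F2 x = 0 := indicator_of_notMem (by simp [not_lt.2 hneg.le]) _
      rw [hu, h1, h2]; ring
    · have habs : |x| = x := abs_of_pos hpos
      by_cases hxc : x ≤ c
      · have hu : u1 t x = 1 := by rw [hu1]; exact if_pos ⟨hpos.le, hxc⟩
        have hsx : Real.sqrt x ≤ t / 2 + 1 := by
          have := Real.sqrt_le_sqrt hxc; rwa [hsqc] at this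
        have hmin : min (Real.sqrt x) K = Real.sqrt x := min_eq_left (by linarith)
        have hxK : x < K ^ 2 := lt_of_le_of_lt (hxc.trans hcT) hTK
        have hind : (Ioo (0 : ℝ) (K ^ 2)).indicator (fun _ => (1:ℝ)) x = 1 :=
          indicator_of_mem (mem_Ioo.2 ⟨hpos, hxK⟩) _
        have h1 : F1 x = pdt φ (t, x) := indicator_of_mem (mem_Icc.2 ⟨hpos.le, hxc⟩) _
        have h2 : F2 x = gd x := indicator_of_mem (mem_Ioc.2 ⟨hpos, hxc⟩) _
        rw [hu, habs, hmin, hind, h1, h2, (hasDerivAt_pdt hφ t x).deriv,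
          (hasDerivAt_pdx hφ t x).deriv, Real.sign_of_pos hpos, hgd]
        ring
      · have hu : u1 t x = 0 := by rw [hu1]; exact if_neg (by push_neg; intro _; linarith)
        have h1 : F1 x = 0 := indicator_of_notMem (by simp [hxc]) _
        have h2 : F2 x = 0 := indicator_of_notMem (by simp [hxc]) _
        rw [hu, h1, h2]; ring
  have hae : ∀ᵐ x : ℝ, x ≠ 0 := by
    rw [ae_iff]
    have h : {x : ℝ | ¬ x ≠ 0} = {0} := by ext y; simp
    rw [h]; exact Real.volume_singleton
  have hintF1 : Integrable F1 := (integrable_indicator_iff measurableSet_Icc).2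
    (hcontt.integrableOn_Icc)
  have hintF2 : Integrable F2 := (integrable_indicator_iff measurableSet_Ioc).2 hgd_int.1
  calc (∫ x : ℝ,
        (u1 t x * deriv (fun s : ℝ => φ (s, x)) t
          + Real.sign x * min (Real.sqrt |x|) K * (u1 t x) ^ 2 * deriv (fun y : ℝ => φ (t, y)) x
          + (u1 t x) ^ 2 * (2 * Real.sqrt |x|)⁻¹ *
              (Ioo (0 : ℝ) (K ^ 2)).indicator (fun _ => (1 : ℝ)) |x| * φ (t, x)))
      = ∫ x : ℝ, (F1 x + F2 x) := by
        refine integral_congr_ae ?_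
        filter_upwards [hae] with x hx using hpt x hx
    _ = (∫ x : ℝ, F1 x) + (∫ x : ℝ, F2 x) := integral_add hintF1 hintF2
    _ = (∫ x : ℝ, ({q : ℝ × ℝ | 0 < q.2 ∧ q.2 ≤ (q.1 / 2 + 1) ^ 2}).indicator (pdt φ) (t, x))
        + (t / 2 + 1) * φ (t, c) := by
        congr 1
        · rw [hF1, integral_indicator measurableSet_Icc, integral_Icc_eq_integral_Ioc]
          have : (fun x : ℝ => ({q : ℝ × ℝ | 0 < q.2 ∧ q.2 ≤ (q.1 / 2 + 1) ^ 2}).indicator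
              (pdt φ) (t, x)) = (Ioc (0:ℝ) c).indicator (fun x => pdt φ (t, x)) := by
            funext x
            by_cases hx : 0 < x ∧ x ≤ c
            · rw [indicator_of_mem
                (show (t, x) ∈ {q : ℝ × ℝ | 0 < q.2 ∧ q.2 ≤ (q.1 / 2 + 1) ^ 2} from hx),
                indicator_of_mem (mem_Ioc.2 hx)]
            · rw [indicator_of_notMem
                (show (t, x) ∉ {q : ℝ × ℝ | 0 < q.2 ∧ q.2 ≤ (q.1 / 2 + 1) ^ 2} from hx),
                indicator_of_notMem (fun hmem => hx (mem_Ioc.1 hmem))]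
          rw [this, integral_indicator measurableSet_Ioc]
        · rw [hF2, integral_indicator measurableSet_Ioc,
            ← intervalIntegral.integral_of_le hc0.le, hFTC, hgc]

lemma hcs_pdt (hφc : HasCompactSupport φ) : HasCompactSupport (pdt φ) :=
  hφc.fderiv_apply ℝ (1, 0)

theorem weak_solution_u1' (T K : ℝ) (hT : 0 < T) (hK : T / 2 + 1 < K)
    (u1 : ℝ → ℝ → ℝ)
    (hu1 : ∀ t x, u1 t x = if 0 ≤ x ∧ x ≤ (t / 2 + 1) ^ 2 then 1 else 0)
    (φ : ℝ × ℝ → ℝ) (hφ : ContDiff ℝ (⊤ : ℕ∞) φ) (hφc : HasCompactSupport φ)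
    (hφT : ∀ x : ℝ, φ (T, x) = 0) :
    (∫ t in Ioc (0 : ℝ) T, ∫ x : ℝ,
        (u1 t x * deriv (fun s : ℝ => φ (s, x)) t
          + Real.sign x * min (Real.sqrt |x|) K * (u1 t x) ^ 2 * deriv (fun y : ℝ => φ (t, y)) x
          + (u1 t x) ^ 2 * (2 * Real.sqrt |x|)⁻¹ *
              (Ioo (0 : ℝ) (K ^ 2)).indicator (fun _ => (1 : ℝ)) |x| * φ (t, x)))
      + (∫ x : ℝ, (Icc (0 : ℝ) 1).indicator (fun _ => (1 : ℝ)) x * φ (0, x)) = 0 := by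
  set cT : ℝ := (T / 2 + 1) ^ 2 with hcT
  have hcT1 : (1:ℝ) ≤ cT := by nlinarith
  set S : Set (ℝ × ℝ) := {q : ℝ × ℝ | 0 < q.2 ∧ q.2 ≤ (q.1 / 2 + 1) ^ 2} with hS
  set F : ℝ × ℝ → ℝ := S.indicator (pdt φ) with hF
  have hSmeas : MeasurableSet S := by
    have : S = {q : ℝ × ℝ | 0 < q.2} ∩ {q : ℝ × ℝ | q.2 ≤ (q.1 / 2 + 1) ^ 2} := by
      ext q; simp [hS]
    rw [this]
    exact (measurableSet_lt measurable_const measurable_snd).inter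
      (measurableSet_le measurable_snd
        (((measurable_fst.div_const 2).add_const 1).pow_const 2))
  obtain ⟨C, hC⟩ := (continuous_pdt hφ).bounded_above_of_compact_support (hcs_pdt hφc)
  have hC0 : 0 ≤ C := le_trans (norm_nonneg _) (hC (0, 0))
  set μpr : Measure (ℝ × ℝ) := (volume.restrict (Ioc (0:ℝ) T)).prod volume with hμpr
  have hFmeas : AEStronglyMeasurable F μpr :=
    ((continuous_pdt hφ).stronglyMeasurable.indicator hSmeas).aestronglyMeasurable
  have hGint : Integrable ((Ioc (0:ℝ) T ×ˢ Icc (0:ℝ) cT).indicator (fun _ => C)) μpr := by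
    refine (integrable_indicator_iff (measurableSet_Ioc.prod measurableSet_Icc)).2 ?_
    refine integrableOn_const ?_
    rw [hμpr, Measure.prod_prod, Measure.restrict_apply measurableSet_Ioc, inter_self,
      Real.volume_Ioc, Real.volume_Icc]
    exact (ENNReal.mul_lt_top ENNReal.ofReal_lt_top ENNReal.ofReal_lt_top).ne
  have hae1 : ∀ᵐ p ∂μpr, p.1 ∈ Ioc (0:ℝ) T := by
    rw [ae_iff]
    have hset : {p : ℝ × ℝ | ¬ p.1 ∈ Ioc (0:ℝ) T} = ((Ioc (0:ℝ) T)ᶜ) ×ˢ (univ : Set ℝ) := by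
      ext p; simp
    rw [hset, hμpr, Measure.prod_prod, Measure.restrict_apply measurableSet_Ioc.compl,
      compl_inter_self]
    simp
  have hFint : Integrable F μpr := by
    refine Integrable.mono' hGint hFmeas ?_
    filter_upwards [hae1] with p hp
    by_cases hpS : p ∈ S
    · have h1 : F p = pdt φ p := indicator_of_mem hpS _
      have h2 : p ∈ Ioc (0:ℝ) T ×ˢ Icc (0:ℝ) cT := by
        refine mem_prod.2 ⟨hp, mem_Icc.2 ⟨hpS.1.le, ?_⟩⟩
        have h3 := hpS.2
        have h4 : (p.1 / 2 + 1) ^ 2 ≤ cT := by nlinarith [hp.1, hp.2]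
        linarith
      rw [h1, indicator_of_mem h2]
      exact hC p
    · have h1 : F p = 0 := indicator_of_notMem hpS _
      rw [h1, norm_zero]
      exact indicator_nonneg (fun _ _ => hC0) _
  -- continuity helpers
  have hcpt : ∀ x : ℝ, Continuous fun t : ℝ => pdt φ (t, x) := fun x =>
    (continuous_pdt hφ).comp (continuous_id.prodMk continuous_const)
  have hFtx : ∀ t x : ℝ, F (t, x) = if 0 < x ∧ x ≤ (t / 2 + 1) ^ 2 then pdt φ (t, x) else 0 := by
    intro t x
    by_cases h : 0 < x ∧ x ≤ (t / 2 + 1) ^ 2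
    · rw [if_pos h, hF]
      exact indicator_of_mem (show (t, x) ∈ S from h) _
    · rw [if_neg h, hF]
      exact indicator_of_notMem (show (t, x) ∉ S from h) _
  -- FTC in t for fixed x over an interval
  have hFTCt : ∀ (a : ℝ) (x : ℝ), a ≤ T →
      (∫ t in Ioc a T, pdt φ (t, x)) = φ (T, x) - φ (a, x) := by
    intro a x haT
    rw [← intervalIntegral.integral_of_le haT]
    exact intervalIntegral.integral_eq_sub_of_hasDerivAt
      (fun t _ => hasDerivAt_pdt hφ t x) ((hcpt x).intervalIntegrable a T)
  set I1 : ℝ → ℝ := (Ioc (0:ℝ) 1).indicator (fun y => -φ (0, y)) with hI1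
  set I2 : ℝ → ℝ := (Ioc (1:ℝ) cT).indicator (fun y => -φ (2 * (Real.sqrt y - 1), y)) with hI2
  have hinner : ∀ x : ℝ, (∫ t in Ioc (0:ℝ) T, F (t, x)) = I1 x + I2 x := by
    intro x
    by_cases hx0 : 0 < x
    · by_cases hx1 : x ≤ 1
      · have heq : EqOn (fun t => F (t, x)) (fun t => pdt φ (t, x)) (Ioc (0:ℝ) T) := by
          intro t ht
          show F (t, x) = pdt φ (t, x)
          rw [hFtx]
          exact if_pos ⟨hx0, by nlinarith [ht.1]⟩
        rw [setIntegral_congr_fun measurableSet_Ioc heq, hFTCt 0 x hT.le, hφT x]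
        have h1 : I1 x = -φ (0, x) := indicator_of_mem (mem_Ioc.2 ⟨hx0, hx1⟩) _
        have h2 : I2 x = 0 := indicator_of_notMem (fun h => absurd (mem_Ioc.1 h).1 (not_lt.2 hx1)) _
        rw [h1, h2]; ring
      · push_neg at hx1
        by_cases hxc : x ≤ cT
        · set τ : ℝ := 2 * (Real.sqrt x - 1) with hτ
          have hsx1 : 1 < Real.sqrt x := by
            rw [← Real.sqrt_one]
            exact Real.sqrt_lt_sqrt (by norm_num) hx1
          have hτ0 : 0 < τ := by simp only [hτ]; linarith
          have hsxT : Real.sqrt x ≤ T / 2 + 1 := by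
            have h := Real.sqrt_le_sqrt hxc
            rwa [Real.sqrt_sq (by linarith : (0:ℝ) ≤ T / 2 + 1)] at h
          have hτT : τ ≤ T := by simp only [hτ]; linarith
          have heq : EqOn (fun t => F (t, x))
              (fun t => (Ici τ).indicator (fun t => pdt φ (t, x)) t) (Ioc (0:ℝ) T) := by
            intro t ht
            have hiff : (0 < x ∧ x ≤ (t / 2 + 1) ^ 2) ↔ τ ≤ t := by
              constructor
              · rintro ⟨-, h⟩
                have := Real.sqrt_le_sqrt h
                rw [Real.sqrt_sq (by linarith [ht.1] : (0:ℝ) ≤ t / 2 + 1)] at this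
                simp only [hτ]; linarith
              · intro h
                refine ⟨hx0, ?_⟩
                have hsle : Real.sqrt x ≤ t / 2 + 1 := by simp only [hτ] at h; linarith
                have := pow_le_pow_left₀ (Real.sqrt_nonneg x) hsle 2
                rwa [Real.sq_sqrt hx0.le] at this
            simp only [hFtx, Set.indicator_apply, mem_Ici]
            by_cases h : τ ≤ t
            · rw [if_pos (hiff.2 h), if_pos h]
            · rw [if_neg (fun hcond => h (hiff.1 hcond)), if_neg h]
          rw [setIntegral_congr_fun measurableSet_Ioc heq,
            setIntegral_indicator measurableSet_Ici]
          have hset : Ioc (0:ℝ) T ∩ Ici τ = Icc τ T := by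
            ext s
            simp only [mem_inter_iff, mem_Ioc, mem_Ici, mem_Icc]
            constructor
            · rintro ⟨⟨-, h2⟩, h3⟩; exact ⟨h3, h2⟩
            · rintro ⟨h1, h2⟩; exact ⟨⟨lt_of_lt_of_le hτ0 h1, h2⟩, h1⟩
          rw [hset, integral_Icc_eq_integral_Ioc, hFTCt τ x hτT, hφT x]
          have h1 : I1 x = 0 := indicator_of_notMem
            (fun h => absurd (mem_Ioc.1 h).2 (not_le.2 hx1)) _
          have h2 : I2 x = -φ (τ, x) := indicator_of_mem (mem_Ioc.2 ⟨hx1, hxc⟩) _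
          rw [h1, h2]; ring
        · push_neg at hxc
          have heq : EqOn (fun t => F (t, x)) (fun _ => (0:ℝ)) (Ioc (0:ℝ) T) := by
            intro t ht
            show F (t, x) = 0
            rw [hFtx]
            refine if_neg ?_
            push_neg
            intro _
            nlinarith [ht.1, ht.2]
          rw [setIntegral_congr_fun measurableSet_Ioc heq]
          have h1 : I1 x = 0 := indicator_of_notMem
            (fun h => absurd (mem_Ioc.1 h).2 (by linarith)) _
          have h2 : I2 x = 0 := indicator_of_notMem
            (fun h => absurd (mem_Ioc.1 h).2 (not_le.2 hxc)) _
          rw [h1, h2]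
          simp
    · have heq : EqOn (fun t => F (t, x)) (fun _ => (0:ℝ)) (Ioc (0:ℝ) T) := by
        intro t ht
        show F (t, x) = 0
        rw [hFtx]
        exact if_neg (fun h => hx0 h.1)
      rw [setIntegral_congr_fun measurableSet_Ioc heq]
      have h1 : I1 x = 0 := indicator_of_notMem (fun h => hx0 (mem_Ioc.1 h).1) _
      have h2 : I2 x = 0 := indicator_of_notMem
        (fun h => hx0 (lt_trans one_pos (mem_Ioc.1 h).1)) _
      rw [h1, h2]
      simp
  -- swap
  have hswap : (∫ t in Ioc (0:ℝ) T, ∫ x : ℝ, F (t, x))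
      = ∫ x : ℝ, ∫ t in Ioc (0:ℝ) T, F (t, x) := by
    apply integral_integral_swap
    exact hFint
  have hI1int : Integrable I1 := (integrable_indicator_iff measurableSet_Ioc).2
    ((hφ.continuous.comp (Continuous.prodMk_right 0)).neg.integrableOn_Ioc)
  have hgcont : Continuous fun y : ℝ => φ (2 * (Real.sqrt y - 1), y) :=
    hφ.continuous.comp ((continuous_const.mul
      (Real.continuous_sqrt.sub continuous_const)).prodMk continuous_id)
  have hI2int : Integrable I2 := (integrable_indicator_iff measurableSet_Ioc).2
    hgcont.neg.integrableOn_Ioc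
  have hPval : (∫ t in Ioc (0:ℝ) T, ∫ x : ℝ, F (t, x))
      = (∫ x in Ioc (0:ℝ) 1, -φ (0, x)) + ∫ x in Ioc (1:ℝ) cT, -φ (2 * (Real.sqrt x - 1), x) := by
    rw [hswap]
    calc (∫ x : ℝ, ∫ t in Ioc (0:ℝ) T, F (t, x)) = ∫ x : ℝ, (I1 x + I2 x) :=
          integral_congr_ae (Filter.Eventually.of_forall hinner)
      _ = (∫ x : ℝ, I1 x) + ∫ x : ℝ, I2 x := integral_add hI1int hI2int
      _ = (∫ x in Ioc (0:ℝ) 1, -φ (0, x)) + ∫ x in Ioc (1:ℝ) cT, -φ (2 * (Real.sqrt x - 1), x) := by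
          rw [hI1, hI2, integral_indicator measurableSet_Ioc, integral_indicator measurableSet_Ioc]
  -- the boundary term
  have hQ : (∫ t in Ioc (0:ℝ) T, (t / 2 + 1) * φ (t, (t / 2 + 1) ^ 2))
      = ∫ x in Ioc (1:ℝ) cT, φ (2 * (Real.sqrt x - 1), x) := by
    rw [← intervalIntegral.integral_of_le hT.le]
    have hder : ∀ t ∈ uIcc (0:ℝ) T, HasDerivAt (fun t : ℝ => (t / 2 + 1) ^ 2) (t / 2 + 1) t := by
      intro t _
      have h : HasDerivAt (fun s : ℝ => (s / 2 + 1) ^ 2) _ t :=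
        (((hasDerivAt_id t).div_const 2).add_const 1).pow 2
      norm_num at h
      convert h using 1
      ring
    have hcomp := intervalIntegral.integral_comp_smul_deriv hder
      (Continuous.continuousOn ((continuous_id.div_const 2).add continuous_const)) hgcont
    have hcongr : EqOn (fun t : ℝ => (t / 2 + 1) * φ (t, (t / 2 + 1) ^ 2))
        (fun t : ℝ => (t / 2 + 1) •
          ((fun y : ℝ => φ (2 * (Real.sqrt y - 1), y)) ∘ fun t : ℝ => (t / 2 + 1) ^ 2) t)
        (uIcc (0:ℝ) T) := by
      intro t ht
      rw [uIcc_of_le hT.le] at ht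
      have ht0 : (0:ℝ) ≤ t / 2 + 1 := by have := ht.1; linarith
      simp only [Function.comp, smul_eq_mul, Real.sqrt_sq ht0]
      ring_nf
    rw [intervalIntegral.integral_congr hcongr, hcomp]
    have h0 : ((0:ℝ) / 2 + 1) ^ 2 = 1 := by norm_num
    rw [h0]
    rw [intervalIntegral.integral_of_le hcT1]
  -- initial term
  have hinit : (∫ x : ℝ, (Icc (0:ℝ) 1).indicator (fun _ => (1:ℝ)) x * φ (0, x))
      = ∫ x in Ioc (0:ℝ) 1, φ (0, x) := by
    have heq : (fun x => (Icc (0:ℝ) 1).indicator (fun _ => (1:ℝ)) x * φ (0, x))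
        = (Icc (0:ℝ) 1).indicator (fun x => φ (0, x)) := by
      funext x
      by_cases h : x ∈ Icc (0:ℝ) 1
      · rw [indicator_of_mem h, indicator_of_mem h, one_mul]
      · rw [indicator_of_notMem h, indicator_of_notMem h, zero_mul]
    rw [heq, integral_indicator measurableSet_Icc, integral_Icc_eq_integral_Ioc]
  -- splitting of the outer integral
  have hsplit : (∫ t in Ioc (0 : ℝ) T, ∫ x : ℝ,
        (u1 t x * deriv (fun s : ℝ => φ (s, x)) t
          + Real.sign x * min (Real.sqrt |x|) K * (u1 t x) ^ 2 * deriv (fun y : ℝ => φ (t, y)) x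
          + (u1 t x) ^ 2 * (2 * Real.sqrt |x|)⁻¹ *
              (Ioo (0 : ℝ) (K ^ 2)).indicator (fun _ => (1 : ℝ)) |x| * φ (t, x)))
      = (∫ t in Ioc (0:ℝ) T, ∫ x : ℝ, F (t, x))
        + ∫ t in Ioc (0:ℝ) T, (t / 2 + 1) * φ (t, (t / 2 + 1) ^ 2) := by
    have heq : EqOn (fun t => ∫ x : ℝ,
        (u1 t x * deriv (fun s : ℝ => φ (s, x)) t
          + Real.sign x * min (Real.sqrt |x|) K * (u1 t x) ^ 2 * deriv (fun y : ℝ => φ (t, y)) x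
          + (u1 t x) ^ 2 * (2 * Real.sqrt |x|)⁻¹ *
              (Ioo (0 : ℝ) (K ^ 2)).indicator (fun _ => (1 : ℝ)) |x| * φ (t, x)))
        (fun t => (∫ x : ℝ, F (t, x)) + (t / 2 + 1) * φ (t, (t / 2 + 1) ^ 2))
        (Ioc (0:ℝ) T) := by
      intro t ht
      exact inner_eq T K hT hK hφ hφc u1 hu1 ht
    rw [setIntegral_congr_fun measurableSet_Ioc heq]
    refine integral_add ?_ ?_
    · exact hFint.integral_prod_left
    · exact (Continuous.mul ((continuous_id.div_const 2).add continuous_const)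
        (hφ.continuous.comp (continuous_id.prodMk
          (((continuous_id.div_const 2).add continuous_const).pow 2)))).integrableOn_Ioc
  rw [hsplit, hPval, hQ, hinit, integral_neg, integral_neg]
  ring

theorem weak_solution_u1 (T K : ℝ) (hT : 0 < T) (hK : T / 2 + 1 < K)
    (u1 : ℝ → ℝ → ℝ)
    (hu1 : ∀ t x, u1 t x = if 0 ≤ x ∧ x ≤ (t / 2 + 1) ^ 2 then 1 else 0) :
    IsWeakSolutionModel T K u1 := by
  intro φ hφ hφc hφT
  exact weak_solution_u1' T K hT hK u1 hu1 φ hφ hφc hφT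
end

section
/- Fix T > 0 and K > T/2 + 1, and define u² : [0,T] × ℝ → ℝ by u²(t,x) = 1 if −(t/2)² ≤ x ≤ (t/2 + 1)² and u²(t,x) = 0 otherwise. Then u² is a weak solution of the model Cauchy problem: for every smooth compactly supported φ : ℝ × ℝ → ℝ with φ(T,x) = 0 for all x, one has ∫₀ᵀ ∫_ℝ [ u²(t,x) ∂ₜφ(t,x) + sgn(x) · min(√|x|, K) · u²(t,x)² · ∂ₓφ(t,x) + u²(t,x)² · (2√|x|)⁻¹ · 1_{0<|x|<K²}(x) · φ(t,x) ] dx dt + ∫_ℝ 1_{[0,1]}(x) φ(0,x) dx = 0. -/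
open MeasureTheory Set intervalIntegral

/-! ### Auxiliary definitions and lemmas -/

/-- The time at which the characteristic region reaches the point `x`. -/
noncomputable def tauf (x : ℝ) : ℝ := max (2 * Real.sqrt (-x)) (2 * (Real.sqrt x - 1))

lemma tauf_cont : Continuous tauf := by unfold tauf; fun_prop

lemma tauf_nonneg (x : ℝ) : 0 ≤ tauf x :=
  le_trans (by positivity) (le_max_left _ _)

lemma tauf_le_iff {t : ℝ} (ht : 0 ≤ t) (x : ℝ) :
    tauf x ≤ t ↔ -(t / 2) ^ 2 ≤ x ∧ x ≤ (t / 2 + 1) ^ 2 := by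
  unfold tauf
  rw [max_le_iff]
  constructor
  · rintro ⟨h1, h2⟩
    constructor
    · have : Real.sqrt (-x) ≤ t / 2 := by linarith
      have := (Real.sqrt_le_iff.mp this).2
      linarith
    · have : Real.sqrt x ≤ t / 2 + 1 := by linarith
      have := (Real.sqrt_le_iff.mp this).2
      linarith
  · rintro ⟨h1, h2⟩
    constructor
    · have : Real.sqrt (-x) ≤ t / 2 := Real.sqrt_le_iff.mpr ⟨by linarith, by linarith⟩
      linarith
    · have : Real.sqrt x ≤ t / 2 + 1 := Real.sqrt_le_iff.mpr ⟨by linarith, h2⟩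
      linarith

lemma tauf_a {t : ℝ} (ht : 0 ≤ t) : tauf (-(t / 2) ^ 2) = t := by
  unfold tauf
  rw [neg_neg, Real.sqrt_sq (by linarith), Real.sqrt_eq_zero'.mpr (by nlinarith)]
  rw [max_eq_left (by nlinarith)]; ring

lemma tauf_b {t : ℝ} (ht : 0 ≤ t) : tauf ((t / 2 + 1) ^ 2) = t := by
  unfold tauf
  rw [Real.sqrt_sq (by linarith), Real.sqrt_eq_zero'.mpr (by nlinarith)]
  rw [max_eq_right (by nlinarith)]; ring

lemma inv2sqrt (x : ℝ) : (2 * Real.sqrt |x|)⁻¹ = (1/2) * |x| ^ (-(1/2) : ℝ) := by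
  rw [mul_inv, Real.rpow_neg (abs_nonneg x), ← Real.sqrt_eq_rpow]
  ring

lemma abs_rpow_II (a b : ℝ) : IntervalIntegrable (fun x : ℝ => |x| ^ (-(1/2) : ℝ)) volume a b := by
  have key : ∀ c : ℝ, 0 ≤ c →
      IntervalIntegrable (fun x : ℝ => |x| ^ (-(1/2) : ℝ)) volume 0 c := by
    intro c hc
    rw [intervalIntegrable_iff, uIoc_of_le hc] at *
    apply ((intervalIntegrable_rpow' (a := 0) (b := c) (r := -(1/2)) (by norm_num)).1).congr_fun
    · intro x hx
      simp only [abs_of_pos hx.1]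
    · exact measurableSet_Ioc
  have key2 : ∀ c : ℝ, IntervalIntegrable (fun x : ℝ => |x| ^ (-(1/2) : ℝ)) volume 0 c := by
    intro c
    rcases le_or_gt 0 c with hc | hc
    · exact key c hc
    · have h1 := key (-c) (by linarith)
      have h2 := (IntervalIntegrable.iff_comp_neg (f := fun x : ℝ => |x| ^ (-(1/2) : ℝ)) (a := 0) (b := -c) (by simp)).mp h1
      simp only [neg_zero, neg_neg, abs_neg] at h2
      exact h2
  exact (key2 a).symm.trans (key2 b)

lemma singular_II {ψ : ℝ → ℝ} (hψ : Continuous ψ) {M : ℝ} (hM : ∀ x, ‖ψ x‖ ≤ M) (a b : ℝ) :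
    IntervalIntegrable (fun x => (2 * Real.sqrt |x|)⁻¹ * ψ x) volume a b := by
  have hM0 : 0 ≤ M := le_trans (norm_nonneg _) (hM 0)
  apply IntervalIntegrable.mono_fun ((abs_rpow_II a b).const_mul (M/2))
  · apply Measurable.aestronglyMeasurable
    apply Measurable.mul _ hψ.measurable
    fun_prop
  · filter_upwards with x
    rw [inv2sqrt]
    have h1 : (0:ℝ) ≤ |x| ^ (-(1/2) : ℝ) := Real.rpow_nonneg (abs_nonneg x) _
    have h2 := hM x
    simp only [norm_mul, Real.norm_eq_abs, abs_of_nonneg h1]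
    rw [abs_of_nonneg (by positivity : (0:ℝ) ≤ (1/2:ℝ)), abs_of_nonneg (by positivity : (0:ℝ) ≤ M/2)]
    rw [Real.norm_eq_abs] at h2
    nlinarith

lemma measurable_rsign : Measurable Real.sign := by
  unfold Real.sign
  exact Measurable.ite (measurableSet_lt measurable_id measurable_const) measurable_const
    (Measurable.ite (measurableSet_lt measurable_const measurable_id) measurable_const
      measurable_const)

lemma abs_rsign_le (x : ℝ) : |Real.sign x| ≤ 1 := by
  rcases lt_trichotomy x 0 with h | h | h
  · rw [Real.sign_of_neg h]; norm_num
  · rw [h, Real.sign_zero]; norm_num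
  · rw [Real.sign_of_pos h]; norm_num

/-- Lower boundary curve of the support region. -/
noncomputable def af (t : ℝ) : ℝ := -(t / 2) ^ 2
/-- Upper boundary curve of the support region. -/
noncomputable def bf (t : ℝ) : ℝ := (t / 2 + 1) ^ 2

lemma af_le_bf {t : ℝ} (ht : 0 ≤ t) : af t ≤ bf t := by unfold af bf; nlinarith
lemma af_cont : Continuous af := by unfold af; fun_prop
lemma bf_cont : Continuous bf := by unfold bf; fun_prop

theorem weak_solution_u2 (T K : ℝ) (hT : 0 < T) (hK : T / 2 + 1 < K)
    (u2 : ℝ → ℝ → ℝ)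
    (hu2 : ∀ t x, u2 t x = if -(t / 2) ^ 2 ≤ x ∧ x ≤ (t / 2 + 1) ^ 2 then 1 else 0) :
    IsWeakSolutionModel T K u2 := by
  intro φ hφ hφc hφT
  have hT0 : (0:ℝ) ≤ T := hT.le
  have hdiff : Differentiable ℝ φ := hφ.differentiable (by simp)
  have hφcont : Continuous φ := hφ.continuous
  set pt : ℝ × ℝ → ℝ := fun p => fderiv ℝ φ p (1, 0) with hpt_def
  set px : ℝ × ℝ → ℝ := fun p => fderiv ℝ φ p (0, 1) with hpx_def
  have hpt : ∀ t x : ℝ, HasDerivAt (fun s => φ (s, x)) (pt (t, x)) t := fun t x =>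
    (hdiff (t, x)).hasFDerivAt.comp_hasDerivAt t ((hasDerivAt_id t).prodMk (hasDerivAt_const t x))
  have hpx : ∀ t x : ℝ, HasDerivAt (fun y => φ (t, y)) (px (t, x)) x := fun t x =>
    (hdiff (t, x)).hasFDerivAt.comp_hasDerivAt x ((hasDerivAt_const x t).prodMk (hasDerivAt_id x))
  have hptc : Continuous pt := (hφ.continuous_fderiv (by simp)).clm_apply continuous_const
  have hpxc : Continuous px := (hφ.continuous_fderiv (by simp)).clm_apply continuous_const
  obtain ⟨M, hM⟩ := hφcont.bounded_above_of_compact_support hφc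
  obtain ⟨M1, hM1⟩ : ∃ C, ∀ p, ‖pt p‖ ≤ C :=
    hptc.bounded_above_of_compact_support
      ((hφc.fderiv ℝ).comp_left (g := fun L : ℝ × ℝ →L[ℝ] ℝ => L (1, 0)) rfl)
  obtain ⟨M2, hM2⟩ : ∃ C, ∀ p, ‖px p‖ ≤ C :=
    hpxc.bounded_above_of_compact_support
      ((hφc.fderiv ℝ).comp_left (g := fun L : ℝ × ℝ →L[ℝ] ℝ => L (0, 1)) rfl)
  set g : ℝ → ℝ := fun x => φ (tauf x, x) with hg_def
  have hgc : Continuous g := hφcont.comp (tauf_cont.prodMk continuous_id)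
  set F : ℝ × ℝ → ℝ := fun p => (Icc (af p.1) (bf p.1)).indicator (fun x => pt (p.1, x)) p.2
    with hF_def
  -- Step 1: computation of the inner integral in `x` for each fixed time `t`.
  have key : ∀ t ∈ Icc (0:ℝ) T,
      (∫ x : ℝ, (u2 t x * deriv (fun s : ℝ => φ (s, x)) t
          + Real.sign x * min (Real.sqrt |x|) K * u2 t x ^ 2 * deriv (fun y : ℝ => φ (t, y)) x
          + u2 t x ^ 2 * (2 * Real.sqrt |x|)⁻¹ *
              (Ioo (0:ℝ) (K ^ 2)).indicator (fun _ => (1:ℝ)) |x| * φ (t, x)))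
        = (∫ x : ℝ, F (t, x)) + ((t / 2 + 1) * φ (t, bf t) + t / 2 * φ (t, af t)) := by
    intro t ht
    rw [mem_Icc] at ht
    have hM20 : 0 ≤ M2 := le_trans (norm_nonneg _) (hM2 0)
    have ht21 : (0:ℝ) ≤ t / 2 + 1 := by linarith [ht.1]
    set G2 : ℝ → ℝ := fun x =>
      Real.sign x * Real.sqrt |x| * px (t, x) + (2 * Real.sqrt |x|)⁻¹ * φ (t, x) with hG2_def
    set G : ℝ → ℝ := fun x => pt (t, x) + G2 x with hG_def
    have hpoint : ∀ x : ℝ, (u2 t x * deriv (fun s : ℝ => φ (s, x)) t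
            + Real.sign x * min (Real.sqrt |x|) K * u2 t x ^ 2 * deriv (fun y : ℝ => φ (t, y)) x
            + u2 t x ^ 2 * (2 * Real.sqrt |x|)⁻¹ *
                (Ioo (0:ℝ) (K ^ 2)).indicator (fun _ => (1:ℝ)) |x| * φ (t, x))
          = (Icc (af t) (bf t)).indicator G x := by
      intro x
      rw [hu2, (hpt t x).deriv, (hpx t x).deriv]
      by_cases hx : -(t / 2) ^ 2 ≤ x ∧ x ≤ (t / 2 + 1) ^ 2
      · rw [if_pos hx, indicator_of_mem (mem_Icc.mpr (by unfold af bf; exact hx))]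
        have habs : |x| ≤ (t / 2 + 1) ^ 2 := abs_le.mpr ⟨by nlinarith [hx.1, ht.1], hx.2⟩
        have hsq : Real.sqrt |x| ≤ t / 2 + 1 := Real.sqrt_le_iff.mpr ⟨ht21, habs⟩
        have hmin : min (Real.sqrt |x|) K = Real.sqrt |x| :=
          min_eq_left (by linarith [ht.2])
        have hind : (1:ℝ) ^ 2 * (2 * Real.sqrt |x|)⁻¹ *
            (Ioo (0:ℝ) (K ^ 2)).indicator (fun _ => (1:ℝ)) |x| * φ (t, x)
            = (2 * Real.sqrt |x|)⁻¹ * φ (t, x) := by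
          rcases eq_or_ne x 0 with rfl | hx0
          · simp
          · rw [indicator_of_mem]
            · ring
            · constructor
              · exact abs_pos.mpr hx0
              · have : (t / 2 + 1) ^ 2 < K ^ 2 := by nlinarith [ht.1, ht.2]
                linarith
        rw [hmin, hind]
        simp only [hG_def, hG2_def]
        ring
      · rw [if_neg hx]
        have hnm : x ∉ Icc (af t) (bf t) := by rw [mem_Icc]; unfold af bf; exact hx
        rw [Set.indicator_of_notMem hnm]
        ring
    simp_rw [hpoint]
    rw [MeasureTheory.integral_indicator measurableSet_Icc,
      MeasureTheory.integral_Icc_eq_integral_Ioc,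
      ← intervalIntegral.integral_of_le (af_le_bf ht.1)]
    have hFt : (∫ x : ℝ, F (t, x)) = ∫ x in (af t)..(bf t), pt (t, x) := by
      have : ∀ x : ℝ, F (t, x) = (Icc (af t) (bf t)).indicator (fun x => pt (t, x)) x := by
        intro x; simp only [hF_def]
      simp_rw [this]
      rw [MeasureTheory.integral_indicator measurableSet_Icc,
        MeasureTheory.integral_Icc_eq_integral_Ioc,
        ← intervalIntegral.integral_of_le (af_le_bf ht.1)]
    have hφt : Continuous fun x => φ (t, x) := hφcont.comp (continuous_const.prodMk continuous_id)
    have hpxt : Continuous fun x => px (t, x) := hpxc.comp (continuous_const.prodMk continuous_id)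
    have hptt : Continuous fun x => pt (t, x) := hptc.comp (continuous_const.prodMk continuous_id)
    have hsing : ∀ c d : ℝ,
        IntervalIntegrable (fun x => (2 * Real.sqrt |x|)⁻¹ * φ (t, x)) volume c d :=
      singular_II hφt (fun x => hM _)
    have hsgn : ∀ c d : ℝ, IntervalIntegrable
        (fun x => Real.sign x * Real.sqrt |x| * px (t, x)) volume c d := by
      intro c d
      apply IntervalIntegrable.mono_fun
        (((continuous_const.mul (Real.continuous_sqrt.comp continuous_abs)) :
          Continuous fun x : ℝ => M2 * Real.sqrt |x|).intervalIntegrable c d)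
      · exact (((measurable_rsign.mul
          (Real.continuous_sqrt.comp continuous_abs).measurable).mul
          hpxt.measurable)).aestronglyMeasurable
      · filter_upwards with x
        have h1 := abs_rsign_le x
        simp only [Real.norm_eq_abs, abs_mul, Pi.mul_apply]
        have h4 : (0:ℝ) ≤ Real.sqrt (abs x) := Real.sqrt_nonneg _
        rw [abs_of_nonneg h4, abs_of_nonneg hM20]
        have h3 : abs (px (t, x)) ≤ M2 := by
          have := hM2 (t, x); rwa [Real.norm_eq_abs] at this
        have h5 : abs (Real.sign x) * Real.sqrt (abs x) * abs (px (t, x))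
            ≤ 1 * Real.sqrt (abs x) * M2 := by
          apply mul_le_mul (mul_le_mul h1 le_rfl h4 zero_le_one) h3 (abs_nonneg _) (by positivity)
        linarith
    have hG2int : ∀ c d : ℝ, IntervalIntegrable G2 volume c d := fun c d =>
      (hsgn c d).add (hsing c d)
    have hbf0 : (0:ℝ) ≤ bf t := by unfold bf; positivity
    have haf0 : af t ≤ 0 := by unfold af; nlinarith [sq_nonneg (t / 2)]
    have hftc_pos : (∫ x in (0:ℝ)..(bf t), G2 x) = (t / 2 + 1) * φ (t, bf t) := by
      have hderiv : ∀ x ∈ Ioo (0:ℝ) (bf t),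
          HasDerivWithinAt (fun x => Real.sqrt x * φ (t, x)) (G2 x) (Ioi x) x := by
        intro x hx
        have hx0 : 0 < x := hx.1
        have hd : HasDerivAt (fun x => Real.sqrt x * φ (t, x))
            (1 / (2 * Real.sqrt x) * φ (t, x) + Real.sqrt x * px (t, x)) x :=
          (Real.hasDerivAt_sqrt hx0.ne').mul (hpx t x)
        have he : G2 x = 1 / (2 * Real.sqrt x) * φ (t, x) + Real.sqrt x * px (t, x) := by
          simp only [hG2_def]
          rw [abs_of_pos hx0, Real.sign_of_pos hx0, one_div]
          ring
        rw [he]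
        exact hd.hasDerivWithinAt
      have hcont : ContinuousOn (fun x => Real.sqrt x * φ (t, x)) (Icc 0 (bf t)) :=
        (Real.continuous_sqrt.mul hφt).continuousOn
      have h := intervalIntegral.integral_eq_sub_of_hasDeriv_right_of_le hbf0 hcont hderiv
        (hG2int 0 (bf t))
      rw [h, Real.sqrt_zero, zero_mul, sub_zero]
      have : Real.sqrt (bf t) = t / 2 + 1 := by unfold bf; exact Real.sqrt_sq ht21
      rw [this]
    have hftc_neg : (∫ x in (af t)..(0:ℝ), G2 x) = t / 2 * φ (t, af t) := by
      have hderiv : ∀ x ∈ Ioo (af t) 0,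
          HasDerivWithinAt (fun x => -(Real.sqrt (-x) * φ (t, x))) (G2 x) (Ioi x) x := by
        intro x hx
        have hx0 : x < 0 := hx.2
        have hsd : HasDerivAt (fun x : ℝ => Real.sqrt (-x)) (1 / (2 * Real.sqrt (-x)) * (-1)) x :=
          (Real.hasDerivAt_sqrt (by linarith : -x ≠ 0)).comp x (hasDerivAt_neg x)
        have hd : HasDerivAt (fun x => -(Real.sqrt (-x) * φ (t, x)))
            (-((1 / (2 * Real.sqrt (-x)) * (-1)) * φ (t, x) + Real.sqrt (-x) * px (t, x))) x :=
          (hsd.mul (hpx t x)).neg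
        have he : G2 x = -((1 / (2 * Real.sqrt (-x)) * (-1)) * φ (t, x)
            + Real.sqrt (-x) * px (t, x)) := by
          simp only [hG2_def]
          rw [abs_of_neg hx0, Real.sign_of_neg hx0, one_div]
          ring
        rw [he]
        exact hd.hasDerivWithinAt
      have hcont : ContinuousOn (fun x => -(Real.sqrt (-x) * φ (t, x))) (Icc (af t) 0) :=
        (((Real.continuous_sqrt.comp continuous_neg).mul hφt).neg).continuousOn
      have h := intervalIntegral.integral_eq_sub_of_hasDeriv_right_of_le haf0 hcont hderiv
        (hG2int (af t) 0)
      rw [h]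
      have h1 : Real.sqrt (-af t) = t / 2 := by
        unfold af; rw [neg_neg]; exact Real.sqrt_sq (by linarith [ht.1])
      rw [neg_zero, Real.sqrt_zero, zero_mul, neg_zero, zero_sub, neg_neg, h1]
    have hsplit : (∫ x in (af t)..(bf t), G x)
        = (∫ x in (af t)..(bf t), pt (t, x)) + ∫ x in (af t)..(bf t), G2 x := by
      simp only [hG_def]
      exact intervalIntegral.integral_add (hptt.intervalIntegrable _ _) (hG2int _ _)
    have hadj : (∫ x in (af t)..(0:ℝ), G2 x) + (∫ x in (0:ℝ)..(bf t), G2 x)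
        = ∫ x in (af t)..(bf t), G2 x :=
      intervalIntegral.integral_add_adjacent_intervals (hG2int _ _) (hG2int _ _)
    rw [hsplit, hFt]
    rw [← hadj, hftc_pos, hftc_neg]
    ring
  -- Step 2: integrability of `F` on the product space.
  have hFint : Integrable F ((volume.restrict (Ioc (0:ℝ) T)).prod volume) := by
    have hM10 : 0 ≤ M1 := le_trans (norm_nonneg _) (hM1 0)
    have hS : IsClosed {p : ℝ × ℝ | af p.1 ≤ p.2 ∧ p.2 ≤ bf p.1} :=
      (isClosed_le (af_cont.comp continuous_fst) continuous_snd).inter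
        (isClosed_le continuous_snd (bf_cont.comp continuous_fst))
    have hFeq : F = indicator {p : ℝ × ℝ | af p.1 ≤ p.2 ∧ p.2 ≤ bf p.1} pt := by
      funext p
      by_cases h : af p.1 ≤ p.2 ∧ p.2 ≤ bf p.1
      · simp only [hF_def]
        rw [indicator_of_mem (mem_Icc.mpr h), indicator_of_mem (by exact h)]
      · simp only [hF_def]
        rw [indicator_of_notMem (fun hc => h (mem_Icc.mp hc)), indicator_of_notMem (by exact h)]
    have hmeas : AEStronglyMeasurable F ((volume.restrict (Ioc (0:ℝ) T)).prod volume) := by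
      rw [hFeq]
      exact ((hptc.measurable.indicator hS.measurableSet)).aestronglyMeasurable
    have hprodr : (volume.restrict (Ioc (0:ℝ) T)).prod (volume : Measure ℝ)
        = ((volume : Measure ℝ).prod (volume : Measure ℝ)).restrict (Ioc (0:ℝ) T ×ˢ univ) := by
      rw [← Measure.prod_restrict, Measure.restrict_univ]
    have hdom : Integrable ((Ioc (0:ℝ) T ×ˢ Icc (af T) (bf T)).indicator fun _ => M1)
        ((volume.restrict (Ioc (0:ℝ) T)).prod volume) := by
      rw [integrable_indicator_iff (measurableSet_Ioc.prod measurableSet_Icc)]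
      apply (integrableOn_const_iff (C := M1)).mpr
      right
      rw [hprodr, Measure.restrict_apply (measurableSet_Ioc.prod measurableSet_Icc)]
      refine lt_of_le_of_lt (measure_mono inter_subset_left) ?_
      rw [Measure.prod_prod]
      exact ENNReal.mul_lt_top (measure_Ioc_lt_top) (measure_Icc_lt_top)
    apply Integrable.mono' hdom hmeas
    rw [hprodr]
    filter_upwards [ae_restrict_mem (measurableSet_Ioc.prod MeasurableSet.univ)] with p hp
    have hp1 : p.1 ∈ Ioc (0:ℝ) T := hp.1
    by_cases h2 : p.2 ∈ Icc (af p.1) (bf p.1)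
    · have : F p = pt (p.1, p.2) := by simp only [hF_def]; exact indicator_of_mem h2 _
      rw [this]
      have hmem : p ∈ Ioc (0:ℝ) T ×ˢ Icc (af T) (bf T) := by
        refine ⟨hp1, ?_⟩
        rw [mem_Icc] at h2 ⊢
        constructor
        · refine le_trans ?_ h2.1
          unfold af
          nlinarith [hp1.1.le, hp1.2]
        · refine le_trans h2.2 ?_
          unfold bf
          nlinarith [hp1.1.le, hp1.2]
      rw [indicator_of_mem hmem]
      exact hM1 _
    · have : F p = 0 := by simp only [hF_def]; exact indicator_of_notMem h2 _
      rw [this, norm_zero]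
      exact indicator_nonneg (fun _ _ => hM10) _
  -- Step 3: the inner integral in `t`, for fixed `x`, after Fubini.
  have hinner : ∀ x : ℝ, (∫ t in Ioc (0:ℝ) T, F (t, x))
      = (Icc (af T) (bf T)).indicator (fun x => -g x) x := by
    intro x
    by_cases hx : x ∈ Icc (af T) (bf T)
    · have hτT : tauf x ≤ T := by
        rw [tauf_le_iff hT0 x]
        rw [mem_Icc] at hx
        unfold af bf at hx
        exact hx
      have congr_t : ∀ t ∈ Ioc (0:ℝ) T,
          F (t, x) = (Icc (tauf x) T).indicator (fun t => pt (t, x)) t := by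
        intro t ht
        simp only [hF_def]
        by_cases h1 : tauf x ≤ t
        · rw [indicator_of_mem (mem_Icc.mpr ⟨h1, ht.2⟩)]
          have hmem : x ∈ Icc (af t) (bf t) := by
            rw [mem_Icc]; unfold af bf
            exact (tauf_le_iff ht.1.le x).mp h1
          rw [indicator_of_mem hmem]
        · have hA : x ∉ Icc (af t) (bf t) := by
            intro hmem
            apply h1
            rw [mem_Icc] at hmem
            unfold af bf at hmem
            exact (tauf_le_iff ht.1.le x).mpr hmem
          have hB : t ∉ Icc (tauf x) T := by rw [mem_Icc]; intro hc; exact h1 hc.1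
          rw [indicator_of_notMem hA, indicator_of_notMem hB]
      rw [setIntegral_congr_fun measurableSet_Ioc congr_t]
      rw [MeasureTheory.integral_indicator measurableSet_Icc]
      rw [Measure.restrict_restrict measurableSet_Icc]
      have hset : (Icc (tauf x) T ∩ Ioc (0:ℝ) T : Set ℝ) =ᵐ[volume] (Ioc (tauf x) T : Set ℝ) := by
        rcases eq_or_lt_of_le (tauf_nonneg x) with h0 | h0
        · have hseteq : Icc (tauf x) T ∩ Ioc (0:ℝ) T = Ioc (tauf x) T := by
            rw [← h0]
            exact inter_eq_right.mpr Ioc_subset_Icc_self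
          rw [hseteq]
          exact Filter.EventuallyEq.rfl
        · have hseteq : Icc (tauf x) T ∩ Ioc (0:ℝ) T = Icc (tauf x) T := by
            apply inter_eq_left.mpr
            intro s hs
            rw [mem_Icc] at hs
            exact ⟨lt_of_lt_of_le h0 hs.1, hs.2⟩
          rw [hseteq]
          exact (Ioc_ae_eq_Icc (α := ℝ)).symm
      rw [setIntegral_congr_set hset, ← intervalIntegral.integral_of_le hτT]
      have hftc : (∫ t in (tauf x)..T, pt (t, x)) = φ (T, x) - φ (tauf x, x) :=
        intervalIntegral.integral_eq_sub_of_hasDerivAt (fun t _ => hpt t x)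
          ((hptc.comp (continuous_id.prodMk continuous_const)).intervalIntegrable _ _)
      rw [hftc, hφT x, indicator_of_mem hx]
      simp [hg_def]
    · rw [indicator_of_notMem hx]
      have hzero : ∀ t ∈ Ioc (0:ℝ) T, F (t, x) = 0 := by
        intro t ht
        simp only [hF_def]
        apply indicator_of_notMem
        intro hmem
        rw [mem_Icc] at hmem
        apply hx
        rw [mem_Icc]
        constructor
        · refine le_trans ?_ hmem.1
          unfold af
          nlinarith [ht.1.le, ht.2]
        · refine le_trans hmem.2 ?_
          unfold bf
          nlinarith [ht.1.le, ht.2]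
      rw [setIntegral_congr_fun measurableSet_Ioc hzero]
      simp
  -- Step 4: the boundary terms, via change of variables.
  have hbdry : (∫ t in Ioc (0:ℝ) T, ((t / 2 + 1) * φ (t, bf t) + t / 2 * φ (t, af t)))
      = (∫ x in (1:ℝ)..(bf T), g x) + ∫ x in (af T)..(0:ℝ), g x := by
    rw [← intervalIntegral.integral_of_le hT0]
    have i1 : IntervalIntegrable (fun t => (t / 2 + 1) * φ (t, bf t)) volume 0 T := by
      apply Continuous.intervalIntegrable; unfold bf; fun_prop
    have i2 : IntervalIntegrable (fun t => t / 2 * φ (t, af t)) volume 0 T := by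
      apply Continuous.intervalIntegrable; unfold af; fun_prop
    rw [intervalIntegral.integral_add i1 i2]
    have hbd : ∀ t ∈ uIcc (0:ℝ) T, HasDerivAt bf (t / 2 + 1) t := by
      intro t _
      have h : HasDerivAt (fun t : ℝ => (t / 2 + 1) ^ 2) (2 * (t / 2 + 1) ^ 1 * (1 / 2)) t :=
        (((hasDerivAt_id t).div_const 2).add_const 1).pow 2
      unfold bf
      convert h using 1
      ring
    have had : ∀ t ∈ uIcc (0:ℝ) T, HasDerivAt af (-(t / 2)) t := by
      intro t _
      have h : HasDerivAt (fun t : ℝ => -((t / 2) ^ 2)) (-(2 * (t / 2) ^ 1 * (1 / 2))) t :=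
        (((hasDerivAt_id t).div_const 2).pow 2).neg
      have e : -(2 * (t / 2) ^ 1 * ((1:ℝ) / 2)) = -(t / 2) := by ring
      rw [e] at h
      unfold af
      exact h
    congr 1
    · have h := integral_comp_smul_deriv (a := 0) (b := T) (f' := fun t => t / 2 + 1) hbd
        (by fun_prop) hgc
      have hb0 : bf 0 = 1 := by unfold bf; norm_num
      rw [hb0] at h
      rw [← h]
      apply intervalIntegral.integral_congr
      intro t ht
      rw [uIcc_of_le hT0, mem_Icc] at ht
      have : g (bf t) = φ (t, bf t) := by simp only [hg_def]; unfold bf; rw [tauf_b ht.1]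
      simp only [smul_eq_mul, Function.comp_apply]
      rw [this]
    · have h := integral_comp_smul_deriv (a := 0) (b := T) (f' := fun t => -(t / 2)) had
        (by fun_prop) hgc
      have ha0 : af 0 = 0 := by unfold af; norm_num
      rw [ha0] at h
      have h2 : ∫ t in (0:ℝ)..T, t / 2 * φ (t, af t)
          = -∫ t in (0:ℝ)..T, (-(t / 2)) • (g ∘ af) t := by
        rw [← intervalIntegral.integral_neg]
        apply intervalIntegral.integral_congr
        intro t ht
        rw [uIcc_of_le hT0, mem_Icc] at ht
        have : g (af t) = φ (t, af t) := by simp only [hg_def]; unfold af; rw [tauf_a ht.1]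
        simp only [smul_eq_mul, Function.comp_apply]
        rw [this]; ring
      rw [h2, h, ← intervalIntegral.integral_symm]
  -- Step 5: the initial-datum term.
  have hInit : (∫ x : ℝ, (Icc (0:ℝ) 1).indicator (fun _ => (1:ℝ)) x * φ (0, x))
      = ∫ x in (0:ℝ)..(1:ℝ), g x := by
    have h1 : ∀ x : ℝ, (Icc (0:ℝ) 1).indicator (fun _ => (1:ℝ)) x * φ (0, x)
        = (Icc (0:ℝ) 1).indicator (fun x => φ (0, x)) x := by
      intro x
      by_cases hx : x ∈ Icc (0:ℝ) 1
      · rw [indicator_of_mem hx, indicator_of_mem hx, one_mul]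
      · rw [indicator_of_notMem hx, indicator_of_notMem hx, zero_mul]
    simp_rw [h1]
    rw [MeasureTheory.integral_indicator measurableSet_Icc,
      MeasureTheory.integral_Icc_eq_integral_Ioc,
      ← intervalIntegral.integral_of_le (zero_le_one)]
    apply intervalIntegral.integral_congr
    intro x hx
    rw [uIcc_of_le zero_le_one, mem_Icc] at hx
    have hτ : tauf x = 0 := le_antisymm
      ((tauf_le_iff le_rfl x).mpr (by constructor <;> nlinarith [hx.1, hx.2])) (tauf_nonneg x)
    rw [hg_def]
    simp [hτ]
  -- Final assembly.
  have hgint : ∀ c d : ℝ, IntervalIntegrable g volume c d := fun c d => hgc.intervalIntegrable c d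
  have hD : (∫ t in Ioc (0:ℝ) T, ∫ x : ℝ, F (t, x)) = -∫ x in (af T)..(bf T), g x := by
    have h1 : (∫ t in Ioc (0:ℝ) T, ∫ x : ℝ, F (t, x)) = ∫ x : ℝ, ∫ t in Ioc (0:ℝ) T, F (t, x) :=
      integral_integral_swap (f := fun t x => F (t, x)) hFint
    rw [h1]
    simp_rw [hinner]
    rw [MeasureTheory.integral_indicator measurableSet_Icc,
      MeasureTheory.integral_Icc_eq_integral_Ioc,
      ← intervalIntegral.integral_of_le (af_le_bf hT0), intervalIntegral.integral_neg]
  rw [setIntegral_congr_fun measurableSet_Ioc (fun t ht => key t (Ioc_subset_Icc_self ht))]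
  have hf1int : Integrable (fun t => ∫ x : ℝ, F (t, x)) (volume.restrict (Ioc (0:ℝ) T)) :=
    hFint.integral_prod_left
  have hf2int : Integrable (fun t => (t / 2 + 1) * φ (t, bf t) + t / 2 * φ (t, af t))
      (volume.restrict (Ioc (0:ℝ) T)) := by
    apply Continuous.integrableOn_Ioc
    unfold af bf
    fun_prop
  rw [MeasureTheory.integral_add hf1int hf2int, hD, hbdry, hInit]
  have e1 : (∫ x in (af T)..(0:ℝ), g x) + ∫ x in (0:ℝ)..(bf T), g x
      = ∫ x in (af T)..(bf T), g x := integral_add_adjacent_intervals (hgint _ _) (hgint _ _)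
  have e2 : (∫ x in (0:ℝ)..(1:ℝ), g x) + ∫ x in (1:ℝ)..(bf T), g x
      = ∫ x in (0:ℝ)..(bf T), g x := integral_add_adjacent_intervals (hgint _ _) (hgint _ _)
  linarith
end

section
/- Let (X,𝒳,μ) be a σ-finite measure space, R > 0, and let f : X × ℝ → ℝ be measurable (with respect to the product of 𝒳 and the Borel σ-algebra, Lebesgue measure on ℝ) such that: (i) f(x,ξ) ∈ {−1,0,1} for a.e. (x,ξ); (ii) f(x,ξ) = 0 for a.e. (x,ξ) with |ξ| > R; (iii) for a.e. (x,ξ,η) ∈ X × ℝ × ℝ with ξ < η < 0 or 0 < ξ < η, one has f(x,ξ) ≥ f(x,η); (iv) for a.e. (x,ξ,η) with ξ < η, one has f(x,ξ) − f(x,η) + 1 ≥ 0. Then, setting u(x) := ∫_ℝ f(x,ξ) dξ, the function u is measurable and for μ-a.e. x ∈ X one has f(x,ξ) = 1_{ξ < u(x)} − 1_{ξ < 0} for Lebesgue-a.e. ξ ∈ ℝ. -/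
/-!
For a.e. `x`, Fubini turns the hypotheses into the same hypotheses on the profile `g = f (x, ·)`.
Comparing with points beyond `R` shows `g ≥ 0` a.e. on `(0, ∞)`, and monotonicity makes
`{ξ > 0 | g ξ = 1}` a.e. downward closed, hence a.e. the interval `(0, a)` with `a` its measure.
The reflection `ξ ↦ -g (-ξ)` satisfies the same hypotheses, so likewise `g = -1` a.e. exactly
on some `(-b, 0)` and `g = 0` elsewhere on `(-∞, 0)`.
The unit jump bound forbids `g = -1` left of `0` together with `g = 1` right of it, so `a = 0` or
`b = 0`, whence `g = χ(a - b, ·)` a.e., and integrating identifies `a - b` with `∫ g`.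
-/

open MeasureTheory Set

noncomputable def kineticFunction (v ξ : ℝ) : ℝ :=
  (if ξ < v then 1 else 0) - (if ξ < 0 then 1 else 0)

theorem integral_kineticFunction (v : ℝ) : ∫ ξ, kineticFunction v ξ = v := by
  have hind : kineticFunction v = (Ico 0 v).indicator 1 - (Ico v 0).indicator 1 := by
    ext ξ
    simp only [kineticFunction, Pi.sub_apply, indicator, mem_Ico, Pi.one_apply]
    split_ifs <;> grind
  rw [hind, Pi.sub_def, integral_sub, integral_indicator_one measurableSet_Ico,
    integral_indicator_one measurableSet_Ico, Real.volume_real_Ico, Real.volume_real_Ico]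
  · rcases le_total 0 v with hv | hv <;> simp [hv]
  all_goals exact (integrableOn_const (by simp)).integrable_indicator measurableSet_Ico

theorem exists_gt_of_ae {P : ℝ → Prop} (h : ∀ᵐ η, P η) (c : ℝ) : ∃ η, c < η ∧ P η := by
  by_contra! hc
  have : volume (Ioi c) = 0 := measure_mono_null (fun η hη => hc η hη) (ae_iff.1 h)
  simp at this

theorem ae_eq_Ioo_of_ae_downwardClosed {S : Set ℝ} (hS : NullMeasurableSet S) (hpos : S ⊆ Ioi 0)
    (hfin : volume S ≠ ⊤)
    (hdown : ∀ᵐ p : ℝ × ℝ, 0 < p.1 → p.1 < p.2 → p.2 ∈ S → p.1 ∈ S) :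
    S =ᵐ[volume] Ioo 0 (volume S).toReal := by
  set a := (volume S).toReal
  have hdown' : ∀ᵐ η, ∀ᵐ ξ, 0 < ξ → ξ < η → η ∈ S → ξ ∈ S :=
    Measure.ae_ae_of_ae_prod (Measure.measurePreserving_swap.quasiMeasurePreserving.ae hdown)
  have hle : ∀ᵐ η, η ∈ S → η ≤ a := by
    filter_upwards [hdown'] with η hη hηS
    have hIoo : Ioo 0 η ≤ᵐ[volume] S := by
      filter_upwards [hη] with ξ hξ h using hξ h.1 h.2 hηS
    have := measure_mono_ae hIoo
    rw [Real.volume_Ioo, sub_zero] at this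
    exact (ENNReal.ofReal_le_iff_le_toReal hfin).1 this
  have hsub : S ≤ᵐ[volume] Ioo 0 a := by
    filter_upwards [hle, Measure.ae_ne volume a] with η h hne hηS
    exact ⟨hpos hηS, (h hηS).lt_of_ne hne⟩
  refine ae_eq_of_ae_subset_of_measure_ge hsub ?_ hS (by simp)
  rw [Real.volume_Ioo, sub_zero, ENNReal.ofReal_toReal hfin]

structure IsKineticProfile (R : ℝ) (g : ℝ → ℝ) : Prop where
  measurable : Measurable g
  values : ∀ᵐ ξ, g ξ = -1 ∨ g ξ = 0 ∨ g ξ = 1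
  support : ∀ᵐ ξ, R < |ξ| → g ξ = 0
  antitone : ∀ᵐ p : ℝ × ℝ, (p.1 < p.2 ∧ p.2 < 0) ∨ (0 < p.1 ∧ p.1 < p.2) → g p.2 ≤ g p.1
  jump_le_one : ∀ᵐ p : ℝ × ℝ, p.1 < p.2 → 0 ≤ g p.1 - g p.2 + 1

namespace IsKineticProfile

variable {R : ℝ} {g : ℝ → ℝ}

theorem comp_neg (hg : IsKineticProfile R g) : IsKineticProfile R (fun ξ => -g (-ξ)) := by
  have hneg := (Measure.measurePreserving_neg (volume : Measure ℝ)).quasiMeasurePreserving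
  have hrefl : MeasurePreserving (fun p : ℝ × ℝ => (-p.2, -p.1)) :=
    (Measure.measurePreserving_neg (volume : Measure (ℝ × ℝ))).comp Measure.measurePreserving_swap
  constructor
  · exact (hg.measurable.comp measurable_neg).neg
  · filter_upwards [hneg.ae hg.values] with ξ h
    rcases h with h | h | h <;> simp [h]
  · filter_upwards [hneg.ae hg.support] with ξ h hR
    simp [h (by rwa [abs_neg])]
  · filter_upwards [hrefl.quasiMeasurePreserving.ae hg.antitone] with p h hp
    have := h (by rcases hp with hp | hp <;> [right; left] <;> constructor <;> linarith)
    linarith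
  · filter_upwards [hrefl.quasiMeasurePreserving.ae hg.jump_le_one] with p h hp
    linarith [h (by linarith)]

theorem ae_nonneg_of_pos (hg : IsKineticProfile R g) : ∀ᵐ ξ, 0 < ξ → 0 ≤ g ξ := by
  have hsupp : ∀ᵐ p : ℝ × ℝ, R < |p.2| → g p.2 = 0 :=
    Measure.quasiMeasurePreserving_snd.ae hg.support
  filter_upwards [Measure.ae_ae_of_ae_prod (hg.antitone.and hsupp)] with ξ hξ hξpos
  obtain ⟨η, hη, hmono, hzero⟩ := exists_gt_of_ae hξ (max ξ R)
  rw [max_lt_iff] at hη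
  have hgη : g η = 0 := hzero (by rw [abs_of_pos (hξpos.trans hη.1)]; exact hη.2)
  simpa [hgη] using hmono (Or.inr ⟨hξpos, hη.1⟩)

theorem exists_ae_eq_of_pos (hg : IsKineticProfile R g) :
    ∃ a, 0 ≤ a ∧ ∀ᵐ ξ, 0 < ξ → g ξ = if ξ < a then 1 else 0 := by
  set S := {ξ | 0 < ξ ∧ g ξ = 1}
  have hSmeas : MeasurableSet S :=
    measurableSet_Ioi.inter (hg.measurable (measurableSet_singleton 1))
  have hSfin : volume S ≠ ⊤ := by
    refine ne_top_of_le_ne_top (measure_Ioc_lt_top (a := 0) (b := R)).ne (measure_mono_ae ?_)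
    filter_upwards [hg.support] with ξ h hξ
    refine ⟨hξ.1, not_lt.1 fun hR => ?_⟩
    exact one_ne_zero (hξ.2.symm.trans (h (by rwa [abs_of_pos hξ.1])))
  have hSdown : ∀ᵐ p : ℝ × ℝ, 0 < p.1 → p.1 < p.2 → p.2 ∈ S → p.1 ∈ S := by
    filter_upwards [hg.antitone, Measure.quasiMeasurePreserving_fst.ae hg.values]
      with p hmono hval h1 h12 hS
    have := hmono (Or.inr ⟨h1, h12⟩)
    rw [hS.2] at this
    refine ⟨h1, ?_⟩
    rcases hval with h | h | h <;> linarith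
  have hSeq :=
    ae_eq_Ioo_of_ae_downwardClosed hSmeas.nullMeasurableSet (fun ξ h => h.1) hSfin hSdown
  refine ⟨(volume S).toReal, ENNReal.toReal_nonneg, ?_⟩
  filter_upwards [hSeq.mem_iff, hg.values, hg.ae_nonneg_of_pos] with ξ hmem hval hnonneg hξ
  split_ifs with ha
  · exact (hmem.2 ⟨hξ, ha⟩).2
  · rcases hval with h | h | h
    · linarith [hnonneg hξ]
    · exact h
    · exact absurd (hmem.1 ⟨hξ, h⟩).2 ha


theorem exists_ae_eq_of_neg (hg : IsKineticProfile R g) :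
    ∃ b, 0 ≤ b ∧ ∀ᵐ ξ, ξ < 0 → g ξ = if -b < ξ then -1 else 0 := by
  obtain ⟨b, hb, hrefl⟩ := hg.comp_neg.exists_ae_eq_of_pos
  refine ⟨b, hb, ?_⟩
  filter_upwards [(Measure.measurePreserving_neg volume).quasiMeasurePreserving.ae hrefl,
    Measure.ae_ne volume (-b)] with ξ h hne hξ
  have := h (neg_pos.2 hξ)
  simp only [neg_neg, neg_lt] at this
  split_ifs at this ⊢ <;> grind

theorem nonpos_or_nonpos_of_ae_eq {a b : ℝ} (hg : IsKineticProfile R g)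
    (ha : ∀ᵐ ξ, 0 < ξ → g ξ = if ξ < a then 1 else 0)
    (hb : ∀ᵐ ξ, ξ < 0 → g ξ = if -b < ξ then -1 else 0) : a ≤ 0 ∨ b ≤ 0 := by
  by_contra! hab
  have hnull : volume (Ioo (-b) 0 ×ˢ Ioo 0 a) = 0 := by
    rw [Measure.volume_eq_prod, measure_eq_zero_iff_ae_notMem]
    filter_upwards [hg.jump_le_one, Measure.quasiMeasurePreserving_fst.ae hb,
      Measure.quasiMeasurePreserving_snd.ae ha] with p hjump h₁ h₂ hp
    have := hjump (hp.1.2.trans hp.2.1)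
    rw [h₁ hp.1.2, h₂ hp.2.1, if_pos hp.1.1, if_pos hp.2.2] at this
    norm_num at this
  rw [Measure.volume_eq_prod, Measure.prod_prod, Real.volume_Ioo, Real.volume_Ioo] at hnull
  simp only [sub_zero, zero_sub, neg_neg, mul_eq_zero, ENNReal.ofReal_eq_zero] at hnull
  obtain ⟨ha, hb⟩ := hab
  rcases hnull with h | h <;> linarith

theorem exists_ae_eq_kineticFunction (hg : IsKineticProfile R g) :
    ∃ v, g =ᵐ[volume] kineticFunction v := by
  obtain ⟨a, ha, hpos⟩ := hg.exists_ae_eq_of_pos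
  obtain ⟨b, hb, hneg⟩ := hg.exists_ae_eq_of_neg
  have hab : a = 0 ∨ b = 0 := by
    rcases hg.nonpos_or_nonpos_of_ae_eq hpos hneg with h | h
    exacts [.inl (le_antisymm h ha), .inr (le_antisymm h hb)]
  refine ⟨a - b, ?_⟩
  filter_upwards [hpos, hneg, Measure.ae_ne volume 0, Measure.ae_ne volume (-b)]
    with ξ hgpos hgneg h0 hb'
  rcases h0.lt_or_gt with hξ | hξ
  · rw [hgneg hξ, kineticFunction]
    rcases hab with rfl | rfl <;> split_ifs <;> grind
  · rw [hgpos hξ, kineticFunction]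
    rcases hab with rfl | rfl <;> split_ifs <;> grind

theorem ae_eq_kineticFunction_integral (hg : IsKineticProfile R g) :
    ∀ᵐ ξ, g ξ = kineticFunction (∫ η, g η) ξ := by
  obtain ⟨v, hv⟩ := hg.exists_ae_eq_kineticFunction
  rwa [integral_congr_ae hv, integral_kineticFunction]

end IsKineticProfile

theorem kinetic_reconstruction_general
    {X : Type*} [MeasurableSpace X] (μ : Measure X) [SigmaFinite μ]
    (R : ℝ)
    (f : X × ℝ → ℝ) (hfmeas : Measurable f)
    (hvals : ∀ᵐ p ∂(μ.prod (volume : Measure ℝ)), f p = -1 ∨ f p = 0 ∨ f p = 1)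
    (hsupp : ∀ᵐ p ∂(μ.prod (volume : Measure ℝ)), R < |p.2| → f p = 0)
    (hmono : ∀ᵐ q ∂(μ.prod (volume : Measure (ℝ × ℝ))),
      (q.2.1 < q.2.2 ∧ q.2.2 < 0) ∨ (0 < q.2.1 ∧ q.2.1 < q.2.2) →
        f (q.1, q.2.2) ≤ f (q.1, q.2.1))
    (hjump : ∀ᵐ q ∂(μ.prod (volume : Measure (ℝ × ℝ))),
      q.2.1 < q.2.2 → 0 ≤ f (q.1, q.2.1) - f (q.1, q.2.2) + 1) :
    Measurable (fun x => ∫ ξ : ℝ, f (x, ξ)) ∧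
    ∀ᵐ x ∂μ, ∀ᵐ ξ : ℝ ∂(volume : Measure ℝ),
      f (x, ξ) = (if ξ < ∫ η : ℝ, f (x, η) then (1 : ℝ) else 0) - (if ξ < 0 then 1 else 0) := by
  refine ⟨hfmeas.stronglyMeasurable.integral_prod_right'.measurable, ?_⟩
  filter_upwards [Measure.ae_ae_of_ae_prod hvals, Measure.ae_ae_of_ae_prod hsupp,
    Measure.ae_ae_of_ae_prod hmono, Measure.ae_ae_of_ae_prod hjump] with x h₁ h₂ h₃ h₄
  exact IsKineticProfile.ae_eq_kineticFunction_integral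
    ⟨hfmeas.comp measurable_prodMk_left, h₁, h₂, h₃, h₄⟩

theorem kinetic_reconstruction
    {X : Type*} [MeasurableSpace X] (μ : Measure X) [SigmaFinite μ]
    (R : ℝ) (hR : 0 < R)
    (f : X × ℝ → ℝ) (hfmeas : Measurable f)
    (hvals : ∀ᵐ p ∂(μ.prod (volume : Measure ℝ)), f p = -1 ∨ f p = 0 ∨ f p = 1)
    (hsupp : ∀ᵐ p ∂(μ.prod (volume : Measure ℝ)), R < |p.2| → f p = 0)
    (hmono : ∀ᵐ q ∂(μ.prod (volume : Measure (ℝ × ℝ))),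
      (q.2.1 < q.2.2 ∧ q.2.2 < 0) ∨ (0 < q.2.1 ∧ q.2.1 < q.2.2) →
        f (q.1, q.2.2) ≤ f (q.1, q.2.1))
    (hjump : ∀ᵐ q ∂(μ.prod (volume : Measure (ℝ × ℝ))),
      q.2.1 < q.2.2 → 0 ≤ f (q.1, q.2.1) - f (q.1, q.2.2) + 1) :
    Measurable (fun x => ∫ ξ : ℝ, f (x, ξ)) ∧
    ∀ᵐ x ∂μ, ∀ᵐ ξ : ℝ ∂(volume : Measure ℝ),
      f (x, ξ) = (if ξ < ∫ η : ℝ, f (x, η) then (1 : ℝ) else 0) - (if ξ < 0 then 1 else 0) :=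
  kinetic_reconstruction_general μ R f hfmeas hvals hsupp hmono hjump
end
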